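/- arXiv:1907.01146 — 9 statements merged into one kernel-verified Lean document; each statement's English description precedes it below -/
import Mathlib

section
/- If T is a generalized hyperbolic operator on a Banach space B with splitting B = E⁻ ⊕ E⁺ (T(E⁺) ⊆ E⁺, T⁻¹(E⁻) ⊆ E⁻, and T restricted to E⁺ and T⁻¹ restricted to E⁻ are uniform contractions with constant λ < 1), then for every x ∈ B, every radius r > 0 and every k ≥ 0, the image T^k(B_r(x) ∩ (E⁻ + x)) contains B_{λ^{-k}·r}(T^k x) ∩ (E⁻ + T^k x). -/
/-- For a generalized hyperbolic operator, forward iterates of a ball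
intersected with the affine subspace `E⁻ + x` contain the ball of radius `r / λ^k`
in the affine subspace `E⁻ + T^k x`. -/
theorem stmt0 {B : Type*} [NormedAddCommGroup B] [NormedSpace ℝ B] [CompleteSpace B]
    (T : B ≃L[ℝ] B) (Em Ep : Submodule ℝ B)
    (hEmc : IsClosed (Em : Set B)) (hEpc : IsClosed (Ep : Set B))
    (hcompl : IsCompl Em Ep)
    (hTEp : ∀ x ∈ Ep, T x ∈ Ep) (hTEm : ∀ x ∈ Em, T.symm x ∈ Em)
    (lam : ℝ) (hlam0 : 0 < lam) (hlam1 : lam < 1)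
    (hcon : ∀ x ∈ Ep, ‖T x‖ ≤ lam * ‖x‖) (hexp : ∀ x ∈ Em, ‖T.symm x‖ ≤ lam * ‖x‖) :
    ∀ (x : B) (r : ℝ), 0 < r → ∀ k : ℕ,
      Metric.ball ((⇑T)^[k] x) (r / lam ^ k) ∩ {y | y - (⇑T)^[k] x ∈ Em}
        ⊆ (⇑T)^[k] '' (Metric.ball x r ∩ {y | y - x ∈ Em}) := by
  intro x r hr k y ⟨hy1, hy2⟩
  have key : ∀ (n : ℕ) (v : B), v ∈ Em →
      (⇑T.symm)^[n] v ∈ Em ∧ ‖(⇑T.symm)^[n] v‖ ≤ lam ^ n * ‖v‖ := by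
    intro n
    induction n with
    | zero => intro v hv; simp [hv]
    | succ n ih =>
      intro v hv
      obtain ⟨h1, h2⟩ := ih v hv
      rw [Function.iterate_succ_apply']
      refine ⟨hTEm _ h1, ?_⟩
      calc ‖T.symm ((⇑T.symm)^[n] v)‖ ≤ lam * ‖(⇑T.symm)^[n] v‖ := hexp _ h1
        _ ≤ lam * (lam ^ n * ‖v‖) := by nlinarith [norm_nonneg ((⇑T.symm)^[n] v)]
        _ = lam ^ (n + 1) * ‖v‖ := by ring
  have hsub : ∀ (n : ℕ) (a b : B),
      (⇑T.symm)^[n] (a - b) = (⇑T.symm)^[n] a - (⇑T.symm)^[n] b := by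
    intro n
    induction n with
    | zero => simp
    | succ n ih => intro a b; simp [Function.iterate_succ_apply', ih, map_sub]
  have hli : Function.LeftInverse (⇑T.symm)^[k] (⇑T)^[k] :=
    Function.LeftInverse.iterate (fun a => T.symm_apply_apply a) k
  have hri : Function.RightInverse (⇑T.symm)^[k] (⇑T)^[k] :=
    Function.RightInverse.iterate (fun a => T.apply_symm_apply a) k
  obtain ⟨hmem, hnorm⟩ := key k (y - (⇑T)^[k] x) hy2
  refine ⟨(⇑T.symm)^[k] y, ⟨?_, ?_⟩, hri y⟩
  · rw [Metric.mem_ball, dist_eq_norm, ← hli x, ← hsub]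
    have hb : ‖y - (⇑T)^[k] x‖ < r / lam ^ k := by
      rw [← dist_eq_norm]; exact hy1
    have hpow : (0:ℝ) < lam ^ k := pow_pos hlam0 k
    calc ‖(⇑T.symm)^[k] (y - (⇑T)^[k] x)‖ ≤ lam ^ k * ‖y - (⇑T)^[k] x‖ := hnorm
      _ < lam ^ k * (r / lam ^ k) := by exact (mul_lt_mul_iff_right₀ hpow).mpr hb
      _ = r := by field_simp
  · show (⇑T.symm)^[k] y - x ∈ Em
    rw [← hli x, ← hsub]
    exact hmem
end

section
/- A continuous linear automorphism T of a Banach space B has the shadowing property if and only if there exists K > 0 such that for every bounded sequence (z_n)_{n ∈ ℤ} in B there exists a sequence (y_n)_{n ∈ ℤ} with sup_n ‖y_n‖ ≤ K · sup_n ‖z_n‖ and y_{n+1} = T y_n + z_n for all n ∈ ℤ. -/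
/-- A continuous linear automorphism has the shadowing property if every
δ-pseudo-orbit is ε-shadowed by a true orbit. -/
def Shadowing {X : Type*} [SeminormedAddCommGroup X] [Module ℝ X] (T : X ≃L[ℝ] X) : Prop :=
  ∀ ε > (0 : ℝ), ∃ δ > (0 : ℝ), ∀ x : ℤ → X,
    (∀ n : ℤ, ‖x (n + 1) - T (x n)‖ < δ) →
    ∃ y : X, ∀ n : ℤ, ‖x n - (T ^ n) y‖ < ε

/-! The difference of two solutions of `y (n + 1) = T (y n) + z n` is a true orbit of `T`.
A δ-pseudo-orbit `x` solves the equation with `z n = x (n + 1) - T (x n)`, so subtracting a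
bounded solution from `x` leaves an orbit shadowing `x`. Conversely, after rescaling `z` so that
`‖z n‖ ≤ δ / 2`, any solution is a δ-pseudo-orbit; subtracting a 1-shadowing orbit leaves a
solution of norm at most 1, and scaling back gives the bound `2 / δ · C`. -/

theorem Int.exists_seq_add_one_eq {α : Type*} (e : ℤ → α ≃ α) (a : α) :
    ∃ x : ℤ → α, x 0 = a ∧ ∀ n, x (n + 1) = e n (x n) := by
  let fwd : ℕ → α := fun k => Nat.rec a (fun k xk => e k xk) k
  let bwd : ℕ → α := fun k => Nat.rec a (fun k xk => (e (Int.negSucc k)).symm xk) k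
  refine ⟨fun | Int.ofNat k => fwd k | Int.negSucc k => bwd (k + 1), rfl, ?_⟩
  rintro (k | _ | k)
  · rfl
  · exact ((e _).apply_symm_apply a).symm
  · exact ((e _).apply_symm_apply _).symm

namespace ContinuousLinearEquiv

variable {R M : Type*} [Semiring R] [TopologicalSpace M] [AddCommMonoid M] [Module R M]

theorem zpow_add_one_apply (T : M ≃L[R] M) (n : ℤ) (x : M) :
    (T ^ (n + 1)) x = T ((T ^ n) x) := by
  rw [add_comm, zpow_one_add]
  rfl

theorem eq_zpow_apply_of_add_one_eq (T : M ≃L[R] M) {u : ℤ → M}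
    (hu : ∀ n, u (n + 1) = T (u n)) (n : ℤ) : u n = (T ^ n) (u 0) := by
  induction n using Int.induction_on with
  | zero => rfl
  | succ n ih => rw [hu, ih, zpow_add_one_apply]
  | pred n ih =>
    apply T.injective
    rw [← hu, ← zpow_add_one_apply, sub_add_cancel, ih]

end ContinuousLinearEquiv

section

variable {E : Type*} [NormedAddCommGroup E] [NormedSpace ℝ E] {T : E ≃L[ℝ] E}

theorem exists_bounded_solution_of_shadowing_one {δ : ℝ} (hδ : 0 < δ)
    (hshad : ∀ x : ℤ → E, (∀ n, ‖x (n + 1) - T (x n)‖ < δ) → ∃ p : E, ∀ n, ‖x n - (T ^ n) p‖ < 1)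
    {z : ℤ → E} {C : ℝ} (hC : 0 < C) (hz : ∀ n, ‖z n‖ ≤ C) :
    ∃ y : ℤ → E, (∀ n, ‖y n‖ ≤ 2 / δ * C) ∧ ∀ n, y (n + 1) = T (y n) + z n := by
  set c : ℝ := δ / (2 * C)
  have hc : 0 < c := by positivity
  obtain ⟨x, -, hx⟩ :=
    Int.exists_seq_add_one_eq (fun n => T.toEquiv.trans (Equiv.addRight (c • z n))) 0
  replace hx : ∀ n, x (n + 1) = T (x n) + c • z n := hx
  have hpseudo : ∀ n, ‖x (n + 1) - T (x n)‖ < δ := fun n => calc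
    ‖x (n + 1) - T (x n)‖ = c * ‖z n‖ := by
      rw [hx, add_sub_cancel_left, norm_smul, Real.norm_of_nonneg hc.le]
    _ ≤ c * C := by gcongr; exact hz n
    _ = δ / 2 := by simp only [c]; field_simp
    _ < δ := by linarith
  obtain ⟨p, hp⟩ := hshad x hpseudo
  refine ⟨fun n => c⁻¹ • (x n - (T ^ n) p), fun n => ?_, fun n => ?_⟩
  · calc ‖c⁻¹ • (x n - (T ^ n) p)‖ ≤ c⁻¹ * 1 := by
          rw [norm_smul, norm_inv, Real.norm_of_nonneg hc.le]
          gcongr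
          exact (hp n).le
      _ = 2 / δ * C := by simp only [c]; field_simp
  · dsimp only
    rw [hx, T.zpow_add_one_apply, map_smul, map_sub, smul_sub, smul_sub, smul_add, smul_smul,
      inv_mul_cancel₀ hc.ne', one_smul]
    abel

theorem Shadowing.exists_bounded_solution (hS : Shadowing T) :
    ∃ K > (0 : ℝ), ∀ (z : ℤ → E) (C : ℝ), (∀ n : ℤ, ‖z n‖ ≤ C) →
      ∃ y : ℤ → E, (∀ n : ℤ, ‖y n‖ ≤ K * C) ∧ ∀ n : ℤ, y (n + 1) = T (y n) + z n := by
  obtain ⟨δ, hδ, hshad⟩ := hS 1 one_pos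
  refine ⟨2 / δ, by positivity, fun z C hz => ?_⟩
  rcases (le_trans (norm_nonneg _) (hz 0)).eq_or_lt with rfl | hC
  · have hz0 : ∀ n, z n = 0 := fun n => norm_le_zero_iff.mp (hz n)
    exact ⟨0, fun n => by simp, fun n => by simp [hz0]⟩
  · exact exists_bounded_solution_of_shadowing_one hδ hshad hC hz

theorem shadowing_of_exists_bounded_solution {K : ℝ} (hK : 0 < K)
    (hsol : ∀ (z : ℤ → E) (C : ℝ), (∀ n : ℤ, ‖z n‖ ≤ C) →
      ∃ y : ℤ → E, (∀ n : ℤ, ‖y n‖ ≤ K * C) ∧ ∀ n : ℤ, y (n + 1) = T (y n) + z n) :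
    Shadowing T := by
  intro ε hε
  refine ⟨ε / (2 * K), by positivity, fun x hx => ?_⟩
  obtain ⟨y, hy, hrec⟩ := hsol (fun n => x (n + 1) - T (x n)) _ (fun n => (hx n).le)
  have horbit : ∀ n, x n - y n = (T ^ n) (x 0 - y 0) :=
    T.eq_zpow_apply_of_add_one_eq fun n => by rw [hrec, map_sub]; abel
  refine ⟨x 0 - y 0, fun n => ?_⟩
  calc ‖x n - (T ^ n) (x 0 - y 0)‖ = ‖y n‖ := by rw [← horbit, sub_sub_cancel]
    _ ≤ K * (ε / (2 * K)) := hy n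
    _ = ε / 2 := by field_simp
    _ < ε := by linarith

end

theorem stmt2_general {B : Type*} [NormedAddCommGroup B] [NormedSpace ℝ B]
    (T : B ≃L[ℝ] B) :
    Shadowing T ↔
      ∃ K > (0 : ℝ), ∀ (z : ℤ → B) (C : ℝ), (∀ n : ℤ, ‖z n‖ ≤ C) →
        ∃ y : ℤ → B, (∀ n : ℤ, ‖y n‖ ≤ K * C) ∧ ∀ n : ℤ, y (n + 1) = T (y n) + z n :=
  ⟨Shadowing.exists_bounded_solution,
    fun ⟨_, hK, hsol⟩ => shadowing_of_exists_bounded_solution hK hsol⟩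

/-- shadowing is equivalent to solving the cohomological equation
`y_{n+1} = T y_n + z_n` with a uniform bound `sup ‖y_n‖ ≤ K · sup ‖z_n‖`. -/
theorem stmt2 {B : Type*} [NormedAddCommGroup B] [NormedSpace ℝ B] [CompleteSpace B]
    (T : B ≃L[ℝ] B) :
    Shadowing T ↔
      ∃ K > (0 : ℝ), ∀ (z : ℤ → B) (C : ℝ), (∀ n : ℤ, ‖z n‖ ≤ C) →
        ∃ y : ℤ → B, (∀ n : ℤ, ‖y n‖ ≤ K * C) ∧ ∀ n : ℤ, y (n + 1) = T (y n) + z n :=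
  stmt2_general T
end

section
/- Let T be a continuous linear automorphism of a Banach space B with the shadowing property, and let E ⊆ B be a closed T-invariant subspace (T(E) = E). Then the induced automorphism on the quotient Banach space B/E also has the shadowing property. -/
/-! Lift a `δ`-pseudo-orbit `x` of `That` to one of `T`: lift each jump `x (n + 1) - That (x n)` to a
vector `d n` of norm `< δ` and solve `y (n + 1) = T (y n) + d n` forwards and, since `T` is invertible,
backwards. Then `mk ∘ y = x`, and a point shadowing `y` projects to a point shadowing `x` because
the quotient map does not increase norms. -/

section IntSeq

variable {α : Type*}

theorem exists_seq_of_zero_of_succ (g : ℤ → α ≃ α) (a : α) :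
    ∃ y : ℤ → α, y 0 = a ∧ ∀ n, y (n + 1) = g n (y n) := by
  refine ⟨fun n ↦ n.inductionOn' 0 a (fun k _ v ↦ g k v) (fun k _ v ↦ (g (k - 1)).symm v),
    Int.inductionOn'_self, fun n ↦ ?_⟩
  rcases le_or_gt 0 n with hn | hn
  · exact Int.inductionOn'_add_one hn
  · have h := Int.inductionOn'_sub_one (motive := fun _ ↦ α) (zero := a)
      (succ := fun k _ v ↦ g k v) (pred := fun k _ v ↦ (g (k - 1)).symm v)
      (show n + 1 ≤ 0 by omega)
    simp only [add_sub_cancel_right] at h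
    dsimp only
    rw [h, Equiv.apply_symm_apply]

theorem seq_ext_of_zero_of_succ (g : ℤ → α ≃ α) {y z : ℤ → α} (h0 : y 0 = z 0)
    (hy : ∀ n, y (n + 1) = g n (y n)) (hz : ∀ n, z (n + 1) = g n (z n)) : y = z := by
  funext n
  induction n using Int.induction_on with
  | zero => exact h0
  | succ k ih => rw [hy, hz, ih]
  | pred k ih =>
    apply (g (-k - 1)).injective
    rw [← hy, ← hz, sub_add_cancel, ih]

end IntSeq

namespace ContinuousLinearEquiv

variable {R X Y : Type*} [Semiring R] [TopologicalSpace X] [AddCommMonoid X] [Module R X]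
  [TopologicalSpace Y] [AddCommMonoid Y] [Module R Y]

theorem zpow_apply_of_semiconj {T : X ≃L[R] X} {S : Y ≃L[R] Y} {π : X → Y}
    (h : ∀ x, S (π x) = π (T x)) (n : ℤ) (x : X) : (S ^ n) (π x) = π ((T ^ n) x) := by
  induction n using Int.induction_on generalizing x with
  | zero => rfl
  | succ k ih =>
    rw [zpow_add_one, zpow_add_one]
    exact (congrArg (S ^ (k : ℤ)) (h x)).trans (ih (T x))
  | pred k ih =>
    rw [zpow_sub_one, zpow_sub_one]
    have h_symm : S.symm (π x) = π (T.symm x) := by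
      rw [S.symm_apply_eq, h, T.apply_symm_apply]
    exact (congrArg (S ^ (-(k : ℤ))) h_symm).trans (ih (T.symm x))

end ContinuousLinearEquiv

section Quotient

variable {R B : Type*} [Ring R] [SeminormedAddCommGroup B] [Module R B]

theorem exists_lift_pseudoOrbit (T : B ≃L[R] B) (E : Submodule R B)
    (That : (B ⧸ E) ≃L[R] (B ⧸ E))
    (hcomm : ∀ x : B, That (Submodule.Quotient.mk x) = Submodule.Quotient.mk (T x))
    {δ : ℝ} (x : ℤ → B ⧸ E) (hx : ∀ n, ‖x (n + 1) - That (x n)‖ < δ) :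
    ∃ y : ℤ → B, (∀ n, ‖y (n + 1) - T (y n)‖ < δ) ∧ ∀ n, Submodule.Quotient.mk (y n) = x n := by
  choose d hd_mk hd_norm using fun n ↦ QuotientAddGroup.norm_lt_iff.1 (hx n)
  obtain ⟨z₀, hz₀⟩ := Submodule.Quotient.mk_surjective E (x 0)
  obtain ⟨y, hy₀, hy⟩ :=
    exists_seq_of_zero_of_succ (fun n ↦ T.toEquiv.trans (Equiv.addRight (d n))) z₀
  refine ⟨y, fun n ↦ ?_, fun n ↦ ?_⟩
  · simpa [hy n] using hd_norm n
  · let g n := That.toEquiv.trans (Equiv.addRight (x (n + 1) - That (x n)))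
    refine congrFun (seq_ext_of_zero_of_succ g (y := fun n ↦ Submodule.Quotient.mk (y n))
      (by simp [hy₀, hz₀]) (fun n ↦ ?_) (fun n ↦ ?_)) n
    · simp only [g, hy n, Equiv.trans_apply, LinearEquiv.coe_toEquiv,
        ContinuousLinearEquiv.coe_toLinearEquiv, Equiv.coe_addRight, Submodule.Quotient.mk_add, hcomm,
        add_right_inj]
      exact hd_mk n
    · simp [g]

end Quotient

theorem stmt6_general {B : Type*} [NormedAddCommGroup B] [NormedSpace ℝ B]
    (T : B ≃L[ℝ] B) (hT : Shadowing T)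
    (E : Submodule ℝ B)
    (That : (B ⧸ E) ≃L[ℝ] (B ⧸ E))
    (hcomm : ∀ x : B, That (Submodule.Quotient.mk x) = Submodule.Quotient.mk (T x)) :
    Shadowing That := by
  intro ε hε
  obtain ⟨δ, hδ, hshadow⟩ := hT ε hε
  refine ⟨δ, hδ, fun x hx ↦ ?_⟩
  obtain ⟨y, hy, hy_lift⟩ := exists_lift_pseudoOrbit T E That hcomm x hx
  obtain ⟨z, hz⟩ := hshadow y hy
  refine ⟨Submodule.Quotient.mk z, fun n ↦ ?_⟩
  calc ‖x n - (That ^ n) (Submodule.Quotient.mk z)‖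
      = ‖(Submodule.Quotient.mk (y n - (T ^ n) z) : B ⧸ E)‖ := by
        rw [Submodule.Quotient.mk_sub, hy_lift,
          ContinuousLinearEquiv.zpow_apply_of_semiconj hcomm]
    _ ≤ ‖y n - (T ^ n) z‖ := Submodule.Quotient.norm_mk_le _ _
    _ < ε := hz n

/-- if `T` has the shadowing property and `E` is a closed invariant subspace,
then the induced automorphism on the quotient `B ⧸ E` has the shadowing property. -/
theorem stmt6 {B : Type*} [NormedAddCommGroup B] [NormedSpace ℝ B] [CompleteSpace B]
    (T : B ≃L[ℝ] B) (hT : Shadowing T)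
    (E : Submodule ℝ B) (hEc : IsClosed (E : Set B))
    (hinv : ⇑T '' (E : Set B) = (E : Set B))
    (That : (B ⧸ E) ≃L[ℝ] (B ⧸ E))
    (hcomm : ∀ x : B, That (Submodule.Quotient.mk x) = Submodule.Quotient.mk (T x)) :
    Shadowing That :=
  stmt6_general T hT E That hcomm
end

section
/- Let T be a continuous linear automorphism of a Banach space B with the shadowing property. If T is expansive (i.e., every non-zero point has unbounded orbit), then T has the unique shadowing property: there exist ε₀, δ₀ > 0 such that for all 0 < ε ≤ ε₀ there is 0 < δ ≤ δ₀ so that every δ-pseudo-orbit is ε-shadowed by at most one point. -/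
/-- a linear automorphism with shadowing which is expansive
(every non-zero point has unbounded orbit) has the unique shadowing property. -/
theorem stmt7 {B : Type*} [NormedAddCommGroup B] [NormedSpace ℝ B] [CompleteSpace B]
    (T : B ≃L[ℝ] B) (hsh : Shadowing T)
    (hexp : ∀ x : B, x ≠ 0 → ¬ ∃ C : ℝ, ∀ n : ℤ, ‖(T ^ n) x‖ ≤ C) :
    ∃ ε₀ > (0 : ℝ), ∃ δ₀ > (0 : ℝ), ∀ ε : ℝ, 0 < ε → ε ≤ ε₀ →
      ∃ δ : ℝ, 0 < δ ∧ δ ≤ δ₀ ∧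
        ∀ x : ℤ → B, (∀ n : ℤ, ‖x (n + 1) - T (x n)‖ < δ) →
          ∀ y₁ y₂ : B, (∀ n : ℤ, ‖x n - (T ^ n) y₁‖ < ε) →
            (∀ n : ℤ, ‖x n - (T ^ n) y₂‖ < ε) → y₁ = y₂ := by
  refine ⟨1, one_pos, 1, one_pos, fun ε hε hε1 => ⟨1, one_pos, le_refl 1, ?_⟩⟩
  intro x hx y₁ y₂ h1 h2
  by_contra hne
  apply hexp (y₁ - y₂) (sub_ne_zero.mpr hne)
  refine ⟨2 * ε, fun n => ?_⟩
  have : (T ^ n) (y₁ - y₂) = (T ^ n) y₁ - (T ^ n) y₂ := map_sub _ _ _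
  rw [this]
  calc ‖(T ^ n) y₁ - (T ^ n) y₂‖
      = ‖(x n - (T ^ n) y₂) - (x n - (T ^ n) y₁)‖ := by rw [show x n - (T ^ n) y₂ - (x n - (T ^ n) y₁) = (T ^ n) y₁ - (T ^ n) y₂ by abel]
    _ ≤ ‖x n - (T ^ n) y₂‖ + ‖x n - (T ^ n) y₁‖ := norm_sub_le _ _
    _ ≤ 2 * ε := by linarith [h1 n, h2 n]
end

section
/- Let T be a generalized hyperbolic operator on a Banach space B. If T is not hyperbolic (i.e., the splitting subspaces E⁻ and E⁺ are not both T-invariant), then T is shifted hyperbolic: the subspace T⁻¹(E⁺) ∩ E⁻ is non-trivial. -/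
/-- a generalized hyperbolic operator which is not hyperbolic (the splitting
subspaces are not both invariant) is shifted hyperbolic: the subspace T⁻¹(E⁺) ∩ E⁻
is non-trivial. -/
theorem stmt9 {B : Type*} [NormedAddCommGroup B] [NormedSpace ℝ B] [CompleteSpace B]
    (T : B ≃L[ℝ] B) (Em Ep : Submodule ℝ B)
    (hEmc : IsClosed (Em : Set B)) (hEpc : IsClosed (Ep : Set B))
    (hcompl : IsCompl Em Ep)
    (hTEp : ∀ x ∈ Ep, T x ∈ Ep) (hTEm : ∀ x ∈ Em, T.symm x ∈ Em)
    (lam : ℝ) (hlam0 : 0 < lam) (hlam1 : lam < 1)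
    (hcon : ∀ x ∈ Ep, ‖T x‖ ≤ lam * ‖x‖) (hexp : ∀ x ∈ Em, ‖T.symm x‖ ≤ lam * ‖x‖)
    (hnothyp : ¬ (⇑T '' (Em : Set B) = (Em : Set B) ∧ ⇑T '' (Ep : Set B) = (Ep : Set B))) :
    ∃ v : B, v ≠ 0 ∧ v ∈ Em ∧ T v ∈ Ep := by
  -- decomposition of any vector via IsCompl
  have hdec : ∀ x : B, ∃ m ∈ Em, ∃ p ∈ Ep, m + p = x := by
    intro x
    have hx : x ∈ Em ⊔ Ep := by rw [hcompl.sup_eq_top]; trivial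
    exact Submodule.mem_sup.mp hx
  rw [not_and_or] at hnothyp
  rcases hnothyp with h1 | h2
  · -- T '' Em ≠ Em, but Em ⊆ T '' Em, so some x ∈ Em has T x ∉ Em
    have hsup : (Em : Set B) ⊆ ⇑T '' (Em : Set B) := by
      intro x hx
      exact ⟨T.symm x, hTEm x hx, T.apply_symm_apply x⟩
    have : ¬ (⇑T '' (Em : Set B) ⊆ (Em : Set B)) := by
      intro hsub
      exact h1 (le_antisymm hsub hsup)
    rw [Set.not_subset] at this
    obtain ⟨y, ⟨x, hxm, rfl⟩, hynm⟩ := this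
    obtain ⟨m, hm, p, hp, hmp⟩ := hdec (T x)
    refine ⟨x - T.symm m, ?_, Em.sub_mem hxm (hTEm m hm), ?_⟩
    · intro h0
      apply hynm
      have : T x = m := by
        have hx : x = T.symm m := by linear_combination (norm := module) h0
        rw [hx, T.apply_symm_apply]
      rw [this]; exact hm
    · have : T (x - T.symm m) = p := by
        rw [map_sub, T.apply_symm_apply]
        linear_combination (norm := module) -hmp
      rw [this]; exact hp
  · -- T '' Ep ≠ Ep, but T '' Ep ⊆ Ep, so some y ∈ Ep has T.symm y ∉ Ep
    have hsub : ⇑T '' (Ep : Set B) ⊆ (Ep : Set B) := by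
      rintro y ⟨x, hx, rfl⟩; exact hTEp x hx
    have : ¬ ((Ep : Set B) ⊆ ⇑T '' (Ep : Set B)) := by
      intro hsup
      exact h2 (le_antisymm hsub hsup)
    rw [Set.not_subset] at this
    obtain ⟨y, hyp, hyni⟩ := this
    obtain ⟨m, hm, p, hp, hmp⟩ := hdec (T.symm y)
    refine ⟨m, ?_, hm, ?_⟩
    · intro h0
      apply hyni
      refine ⟨p, hp, ?_⟩
      have : p = T.symm y := by rw [← hmp, h0, zero_add]
      rw [this, T.apply_symm_apply]
    · have : T m = y - T p := by
        have : T m + T p = y := by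
          rw [← map_add, hmp, T.apply_symm_apply]
        linear_combination (norm := module) this
      rw [this]; exact Ep.sub_mem hyp (hTEp p hp)
end

section
/- Let T be a generalized hyperbolic operator on B with splitting E⁻ ⊕ E⁺, and suppose x ∈ E⁻ has its entire forward orbit contained in E⁻ (T^n x ∈ E⁻ for all n ≥ 0). Then on the smallest closed T-invariant subspace X containing the orbit of x, T is a uniform expansion: ‖y‖ ≤ λ‖T y‖ for all y ∈ X. -/
/-!
Every point of the two-sided orbit of `x` lies in `E⁻`: the forward orbit by hypothesis and the
backward orbit because `T⁻¹` preserves `E⁻`. Hence the closed span `X` of the orbit lies in the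
closed subspace `E⁻`. As `X` is `T`-invariant, `T y ∈ E⁻` for `y ∈ X`, and the expansion
estimate on `E⁻` gives `‖y‖ = ‖T⁻¹ (T y)‖ ≤ λ ‖T y‖`.
-/

namespace ContinuousLinearEquiv

variable {R M : Type*} [Semiring R] [AddCommMonoid M] [Module R M] [TopologicalSpace M]

theorem zpow_apply_mem_of_forall_natCast (T : M ≃L[R] M) {s : Set M} (hs : Set.MapsTo T.symm s s)
    {x : M} (h : ∀ n : ℕ, (T ^ (n : ℤ)) x ∈ s) (n : ℤ) : (T ^ n) x ∈ s := by
  induction n with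
  | zero => exact h 0
  | succ i _ => exact_mod_cast h (i + 1)
  | pred i ih =>
    have hpow : T ^ (-(i : ℤ) - 1) = T⁻¹ * T ^ (-(i : ℤ)) := by
      rw [sub_eq_neg_add, zpow_add, zpow_neg_one]
    rw [hpow]
    exact hs ih

theorem zpow_one_add_apply (T : M ≃L[R] M) (n : ℤ) (x : M) :
    (T ^ (1 + n)) x = T ((T ^ n) x) := by
  rw [zpow_one_add]
  rfl

theorem span_range_zpow_apply_mem_invtSubmodule (T : M ≃L[R] M) (x : M) :
    Submodule.span R (Set.range fun n : ℤ => (T ^ n) x) ∈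
      Module.End.invtSubmodule (T : M →ₗ[R] M) := by
  rw [Module.End.mem_invtSubmodule, Submodule.span_le]
  rintro _ ⟨n, rfl⟩
  exact Submodule.subset_span ⟨1 + n, zpow_one_add_apply T n x⟩

theorem topologicalClosure_span_range_zpow_apply_mem_invtSubmodule [TopologicalSpace R]
    [ContinuousSMul R M] [ContinuousAdd M] (T : M ≃L[R] M) (x : M) :
    (Submodule.span R (Set.range fun n : ℤ => (T ^ n) x)).topologicalClosure ∈
      Module.End.invtSubmodule (T : M →ₗ[R] M) :=
  Submodule.topologicalClosure_mem_invtSubmodule (f := (T : M →L[R] M))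
    (span_range_zpow_apply_mem_invtSubmodule T x)

end ContinuousLinearEquiv

theorem stmt10_general {B : Type*} [NormedAddCommGroup B] [NormedSpace ℝ B]
    (T : B ≃L[ℝ] B) (Em : Submodule ℝ B)
    (hEmc : IsClosed (Em : Set B))
    (hTEm : ∀ x ∈ Em, T.symm x ∈ Em)
    (lam : ℝ)
    (hexp : ∀ x ∈ Em, ‖T.symm x‖ ≤ lam * ‖x‖)
    (x : B) (horb : ∀ n : ℕ, (T ^ (n : ℤ)) x ∈ Em) :
    ∀ y ∈ (Submodule.span ℝ (Set.range fun n : ℤ => (T ^ n) x)).topologicalClosure,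
      ‖y‖ ≤ lam * ‖T y‖ := by
  intro y hy
  have hspan_le : Submodule.span ℝ (Set.range fun n : ℤ => (T ^ n) x) ≤ Em :=
    Submodule.span_le.mpr <| Set.range_subset_iff.mpr <|
      T.zpow_apply_mem_of_forall_natCast hTEm horb
  have hTy : T y ∈ Em :=
    Submodule.topologicalClosure_minimal _ hspan_le hEmc
      (T.topologicalClosure_span_range_zpow_apply_mem_invtSubmodule x hy)
  simpa using hexp (T y) hTy

/-- if the entire forward orbit of x ∈ E⁻ stays in E⁻, then T is a
uniform expansion (‖y‖ ≤ λ‖T y‖) on the smallest closed T-invariant subspace containing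
the orbit of x, namely the closed linear span of the full orbit. -/
theorem stmt10 {B : Type*} [NormedAddCommGroup B] [NormedSpace ℝ B] [CompleteSpace B]
    (T : B ≃L[ℝ] B) (Em Ep : Submodule ℝ B)
    (hEmc : IsClosed (Em : Set B)) (hEpc : IsClosed (Ep : Set B))
    (hcompl : IsCompl Em Ep)
    (hTEp : ∀ x ∈ Ep, T x ∈ Ep) (hTEm : ∀ x ∈ Em, T.symm x ∈ Em)
    (lam : ℝ) (hlam0 : 0 < lam) (hlam1 : lam < 1)
    (hcon : ∀ x ∈ Ep, ‖T x‖ ≤ lam * ‖x‖) (hexp : ∀ x ∈ Em, ‖T.symm x‖ ≤ lam * ‖x‖)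
    (x : B) (hx : x ∈ Em) (horb : ∀ n : ℕ, (T ^ (n : ℤ)) x ∈ Em) :
    ∀ y ∈ (Submodule.span ℝ (Set.range fun n : ℤ => (T ^ n) x)).topologicalClosure,
      ‖y‖ ≤ lam * ‖T y‖ :=
  stmt10_general T Em hEmc hTEm lam hexp x horb
end

section
/- Let T be a shifted hyperbolic operator on B and let v be a non-zero vector in E⁺ ∩ T(E⁻). Then the orbit {T^n v : n ∈ ℤ} is linearly independent. In particular, the closure of the bounded set of T is an infinite-dimensional subspace. -/
/-- The bounded set of T: points with infinitely many forward iterates and infinitely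
many backward iterates of norm bounded by some constant K(x). -/
def BoundedSet {B : Type*} [NormedAddCommGroup B] [NormedSpace ℝ B]
    (T : B ≃L[ℝ] B) : Set B :=
  {x | ∃ K : ℝ,
    (∀ N : ℕ, ∃ n : ℕ, N ≤ n ∧ ‖(T ^ (n : ℤ)) x‖ < K) ∧
    (∀ N : ℕ, ∃ n : ℕ, N ≤ n ∧ ‖(T ^ (-(n : ℤ))) x‖ < K)}

private lemma zpow_succ_apply' {B : Type*} [NormedAddCommGroup B] [NormedSpace ℝ B]
    (T : B ≃L[ℝ] B) (a : ℤ) (x : B) : (T ^ (a + 1)) x = T ((T ^ a) x) := by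
  rw [add_comm, zpow_one_add]; rfl

private lemma zpow_pred_apply' {B : Type*} [NormedAddCommGroup B] [NormedSpace ℝ B]
    (T : B ≃L[ℝ] B) (a : ℤ) (x : B) : (T ^ (a - 1)) x = T.symm ((T ^ a) x) := by
  rw [sub_eq_add_neg, add_comm, zpow_add, zpow_neg_one]; rfl

private lemma zpow_add_apply' {B : Type*} [NormedAddCommGroup B] [NormedSpace ℝ B]
    (T : B ≃L[ℝ] B) (a b : ℤ) (x : B) : (T ^ a) ((T ^ b) x) = (T ^ (a + b)) x := by
  rw [zpow_add]; rfl

/-- for a shifted hyperbolic operator and a non-zero transition vector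
v ∈ E⁺ ∩ T(E⁻), the full orbit of v is linearly independent; in particular the closure
of the bounded set is an infinite-dimensional subspace. -/
theorem stmt11 {B : Type*} [NormedAddCommGroup B] [NormedSpace ℝ B] [CompleteSpace B]
    (T : B ≃L[ℝ] B) (Em Ep : Submodule ℝ B)
    (hEmc : IsClosed (Em : Set B)) (hEpc : IsClosed (Ep : Set B))
    (hcompl : IsCompl Em Ep)
    (hTEp : ∀ x ∈ Ep, T x ∈ Ep) (hTEm : ∀ x ∈ Em, T.symm x ∈ Em)
    (lam : ℝ) (hlam0 : 0 < lam) (hlam1 : lam < 1)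
    (hcon : ∀ x ∈ Ep, ‖T x‖ ≤ lam * ‖x‖) (hexp : ∀ x ∈ Em, ‖T.symm x‖ ≤ lam * ‖x‖)
    (v : B) (hv : v ∈ Ep) (hv' : T.symm v ∈ Em) (hv0 : v ≠ 0) :
    LinearIndependent ℝ (fun n : ℤ => (T ^ n) v) ∧
    ∀ S : Submodule ℝ B, (S : Set B) = closure (BoundedSet T) →
      ¬ FiniteDimensional ℝ S := by
  have hsymm0 : T.symm v ≠ 0 := by
    intro h
    apply hv0
    have := congrArg T h
    simpa using this
  -- forward iterates stay in Ep with norm bounded by ‖v‖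
  have hfwd : ∀ n : ℕ, (T ^ (n : ℤ)) v ∈ Ep ∧ ‖(T ^ (n : ℤ)) v‖ ≤ ‖v‖ := by
    intro n
    induction n with
    | zero => simpa using ⟨hv, le_refl _⟩
    | succ n ih =>
      have h1 : ((n + 1 : ℕ) : ℤ) = (n : ℤ) + 1 := by push_cast; ring
      rw [h1, zpow_succ_apply']
      refine ⟨hTEp _ ih.1, ?_⟩
      calc ‖T ((T ^ (n : ℤ)) v)‖ ≤ lam * ‖(T ^ (n : ℤ)) v‖ := hcon _ ih.1
        _ ≤ 1 * ‖v‖ := by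
            apply mul_le_mul (le_of_lt hlam1) ih.2 (norm_nonneg _) zero_le_one
        _ = ‖v‖ := one_mul _
  -- backward iterates stay in Em with norm bounded by ‖T.symm v‖
  have hbwd : ∀ n : ℕ, (T ^ (-(n : ℤ) - 1)) v ∈ Em ∧ ‖(T ^ (-(n : ℤ) - 1)) v‖ ≤ ‖T.symm v‖ := by
    intro n
    induction n with
    | zero =>
      have h1 : (-((0:ℕ) : ℤ) - 1) = (0 : ℤ) - 1 := by simp
      rw [h1, zpow_pred_apply']
      simpa using ⟨hv', le_refl _⟩
    | succ n ih =>
      have h1 : (-((n + 1 : ℕ) : ℤ) - 1) = (-(n : ℤ) - 1) - 1 := by push_cast; ring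
      rw [h1, zpow_pred_apply']
      refine ⟨hTEm _ ih.1, ?_⟩
      calc ‖T.symm ((T ^ (-(n : ℤ) - 1)) v)‖ ≤ lam * ‖(T ^ (-(n : ℤ) - 1)) v‖ := hexp _ ih.1
        _ ≤ 1 * ‖T.symm v‖ := by
            apply mul_le_mul (le_of_lt hlam1) ih.2 (norm_nonneg _) zero_le_one
        _ = ‖T.symm v‖ := one_mul _
  have hmemEp : ∀ k : ℤ, 0 ≤ k → (T ^ k) v ∈ Ep := by
    intro k hk
    have : k = ((k.toNat : ℕ) : ℤ) := by omega
    rw [this]; exact (hfwd k.toNat).1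
  -- the full-orbit norm bound
  have hbound : ∀ k : ℤ, ‖(T ^ k) v‖ ≤ ‖v‖ + ‖T.symm v‖ := by
    intro k
    rcases le_or_gt 0 k with hk | hk
    · have : k = ((k.toNat : ℕ) : ℤ) := by omega
      rw [this]
      have := (hfwd k.toNat).2
      have h2 : (0:ℝ) ≤ ‖T.symm v‖ := norm_nonneg _
      linarith
    · have : k = -(((-k - 1).toNat : ℕ) : ℤ) - 1 := by omega
      rw [this]
      have := (hbwd (-k - 1).toNat).2
      have h2 : (0:ℝ) ≤ ‖v‖ := norm_nonneg _
      linarith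
  -- linear independence
  have hli : LinearIndependent ℝ (fun n : ℤ => (T ^ n) v) := by
    rw [linearIndependent_iff']
    intro s g hsum
    by_contra hbad
    push_neg at hbad
    obtain ⟨i0, hi0s, hi0⟩ := hbad
    set t := s.filter (fun i => g i ≠ 0) with ht
    have htne : t.Nonempty := ⟨i0, Finset.mem_filter.mpr ⟨hi0s, hi0⟩⟩
    set m := t.min' htne with hm
    have hmt : m ∈ t := t.min'_mem htne
    have hms : m ∈ s := (Finset.mem_filter.mp hmt).1
    have hgm : g m ≠ 0 := (Finset.mem_filter.mp hmt).2
    have hmin : ∀ i ∈ t, m ≤ i := fun i hi => t.min'_le i hi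
    -- apply T^(-m-1) to the relation
    have h2 : ∑ i ∈ s, g i • (T ^ (i - m - 1)) v = 0 := by
      have h := congrArg (fun x => (T ^ (-m - 1)) x) hsum
      simp only [map_sum, map_smul, map_zero] at h
      rw [← h]
      apply Finset.sum_congr rfl
      intro i _
      rw [zpow_add_apply']
      congr 2
      ring
    rw [← Finset.add_sum_erase _ _ hms] at h2
    have hmm : (m - m - 1 : ℤ) = 0 - 1 := by ring
    rw [hmm, zpow_pred_apply'] at h2
    simp only [zpow_zero] at h2
    have h1v : (1 : B ≃L[ℝ] B) v = v := rfl
    rw [h1v] at h2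
    have heq : g m • T.symm v = -∑ i ∈ s.erase m, g i • (T ^ (i - m - 1)) v :=
      eq_neg_of_add_eq_zero_left h2
    have hrhsEp : g m • T.symm v ∈ Ep := by
      rw [heq]
      refine Ep.neg_mem (Submodule.sum_mem _ ?_)
      intro i hi
      by_cases hgi : g i = 0
      · rw [hgi, zero_smul]; exact Ep.zero_mem
      · have his : i ∈ s := Finset.mem_of_mem_erase hi
        have hit : i ∈ t := Finset.mem_filter.mpr ⟨his, hgi⟩
        have him : i ≠ m := Finset.ne_of_mem_erase hi
        have : 0 ≤ i - m - 1 := by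
          have := hmin i hit
          omega
        exact Ep.smul_mem _ (hmemEp _ this)
    have hlhsEm : g m • T.symm v ∈ Em := Em.smul_mem _ hv'
    have hzero : g m • T.symm v = 0 := by
      have := hcompl.inf_eq_bot
      have hmem : g m • T.symm v ∈ Em ⊓ Ep := ⟨hlhsEm, hrhsEp⟩
      rw [this] at hmem
      simpa using hmem
    rcases smul_eq_zero.mp hzero with h | h
    · exact hgm h
    · exact hsymm0 h
  refine ⟨hli, ?_⟩
  intro S hS hfin
  -- every orbit point lies in the bounded set, hence in S
  have hmemS : ∀ n : ℤ, (T ^ n) v ∈ S := by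
    intro n
    have hBS : (T ^ n) v ∈ BoundedSet T := by
      refine ⟨‖v‖ + ‖T.symm v‖ + 1, fun N => ⟨N, le_rfl, ?_⟩, fun N => ⟨N, le_rfl, ?_⟩⟩
      · rw [zpow_add_apply']
        have := hbound ((N : ℤ) + n)
        linarith
      · rw [zpow_add_apply']
        have := hbound (-(N : ℤ) + n)
        linarith
    have : (T ^ n) v ∈ closure (BoundedSet T) := subset_closure hBS
    rw [← SetLike.mem_coe, hS]
    exact this
  let f : ℤ → S := fun n => ⟨(T ^ n) v, hmemS n⟩
  have hlf : LinearIndependent ℝ f := by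
    apply LinearIndependent.of_comp S.subtype
    exact hli
  have : Finite ℤ := hlf.finite
  exact not_finite ℤ
end

section
/- Let T be a generalized hyperbolic operator and v ∈ E⁺ ∩ T(E⁻) non-zero. For each k ≥ 1, the series v_k = ∑_{n ∈ ℤ} T^{nk} v converges absolutely, and v_k is a periodic point of T of exact (minimal) period k. -/
/-!
Forward iterates `T ^ m v` (`m ≥ 0`) stay in `E⁺` and backward ones (`m < 0`) stay in `E⁻`, both
decaying geometrically, so the whole orbit of `v` is absolutely summable, and the sum `S` over the
exponents `kℤ` is `T ^ k`-invariant by reindexing. Split `S = A + R` with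
`A = ∑_{n ≥ 0} T^{nk} v ∈ E⁺` and `R ∈ E⁻`. If `T ^ j S = S` with `0 < j < k`, the exponents in
`T ^ j A` stay nonnegative and those in `T ^ j R` stay negative, so uniqueness of the decomposition
along `E⁻ ⊕ E⁺` gives `T ^ j A = A`. With `A = v + T ^ k A` this writes
`T⁻¹ v = T ^ (j - 1) A - T ^ (k - 1) A ∈ E⁺`; since also `T⁻¹ v ∈ E⁻`, `v = 0`.
-/

namespace ContinuousLinearEquiv

variable {R M : Type*} [Semiring R] [TopologicalSpace M] [AddCommMonoid M] [Module R M]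

@[simp]
theorem one_apply (x : M) : (1 : M ≃L[R] M) x = x := rfl

@[simp]
theorem mul_apply (e f : M ≃L[R] M) (x : M) : (e * f) x = e (f x) := rfl

@[simp]
theorem inv_apply (e : M ≃L[R] M) (x : M) : e⁻¹ x = e.symm x := rfl

theorem coe_pow (e : M ≃L[R] M) (n : ℕ) : ⇑(e ^ n) = e^[n] := by
  induction n with
  | zero => rfl
  | succ n ih => ext x; rw [pow_succ, mul_apply, ih, Function.iterate_succ_apply]

theorem zpow_add_apply (e : M ≃L[R] M) (a b : ℤ) (x : M) :
    (e ^ (a + b)) x = (e ^ a) ((e ^ b) x) := by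
  rw [zpow_add, mul_apply]

theorem zpow_neg_add_one_apply (e : M ≃L[R] M) (n : ℕ) (x : M) :
    (e ^ (-((n : ℤ) + 1))) x = (e.symm ^ n) (e.symm x) := by
  rw [zpow_neg, ← Nat.cast_succ, zpow_natCast, ← inv_pow, pow_succ, mul_apply, inv_apply]
  rfl

section Contraction

variable {R B : Type*} [Semiring R] [SeminormedAddCommGroup B] [Module R B]

theorem norm_pow_apply_le {T : B ≃L[R] B} {s : Set B} (hT : Set.MapsTo T s s) {c : ℝ}
    (hc : 0 ≤ c) (hcon : ∀ x ∈ s, ‖T x‖ ≤ c * ‖x‖) {x : B} (hx : x ∈ s) (n : ℕ) :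
    ‖(T ^ n) x‖ ≤ c ^ n * ‖x‖ := by
  induction n with
  | zero => simp
  | succ n ih =>
    have hmem : (T ^ n) x ∈ s := by rw [coe_pow]; exact hT.iterate n hx
    calc ‖(T ^ (n + 1)) x‖ = ‖T ((T ^ n) x)‖ := by rw [pow_succ', mul_apply]
      _ ≤ c * ‖(T ^ n) x‖ := hcon _ hmem
      _ ≤ c * (c ^ n * ‖x‖) := by gcongr
      _ = c ^ (n + 1) * ‖x‖ := by ring

end Contraction

end ContinuousLinearEquiv

theorem Submodule.eq_of_add_eq_add {R M : Type*} [Ring R] [AddCommGroup M] [Module R M]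
    {p q : Submodule R M} (h : Disjoint p q) {a a' b b' : M} (ha : a ∈ p) (ha' : a' ∈ p)
    (hb : b ∈ q) (hb' : b' ∈ q) (heq : a + b = a' + b') : a = a' := by
  have hdiff : a - a' = b' - b := by rw [sub_eq_sub_iff_add_eq_add, heq, add_comm]
  exact sub_eq_zero.mp <| Submodule.disjoint_def.mp h _ (sub_mem ha ha') (hdiff ▸ sub_mem hb' hb)

open ContinuousLinearEquiv

section Shift

variable {R M : Type*} [Semiring R] [TopologicalSpace M] [AddCommGroup M] [Module R M]
  [T2Space M] (T : M ≃L[R] M) (v : M) (k : ℤ)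

theorem isFixedPt_zpow_tsum_zpow_mul_apply :
    Function.IsFixedPt (T ^ k) (∑' n : ℤ, (T ^ (n * k)) v) := by
  rw [Function.IsFixedPt, ContinuousLinearEquiv.map_tsum]
  have hshift (n : ℤ) : (T ^ k) ((T ^ (n * k)) v) = (T ^ ((n + 1) * k)) v := by
    rw [← zpow_add_apply, add_one_mul, add_comm]
  simp_rw [hshift]
  exact (Equiv.addRight 1).tsum_eq fun n => (T ^ (n * k)) v

theorem tsum_nat_zpow_mul_apply_eq_add [IsTopologicalAddGroup M]
    (hsum : Summable fun n : ℕ => (T ^ ((n : ℤ) * k)) v) :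
    ∑' n : ℕ, (T ^ ((n : ℤ) * k)) v = v + (T ^ k) (∑' n : ℕ, (T ^ ((n : ℤ) * k)) v) := by
  conv_lhs => rw [hsum.tsum_eq_zero_add]
  rw [ContinuousLinearEquiv.map_tsum]
  congr 1
  · simp
  · refine tsum_congr fun n => ?_
    rw [← zpow_add_apply]
    push_cast
    ring_nf

end Shift

section TransitionOrbit

variable {B : Type*} [NormedAddCommGroup B] [NormedSpace ℝ B] {T : B ≃L[ℝ] B}
  {Em Ep : Submodule ℝ B} {v : B}

theorem zpow_apply_mem_of_nonneg (hTEp : Set.MapsTo T Ep Ep) (hv : v ∈ Ep) {m : ℤ}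
    (hm : 0 ≤ m) : (T ^ m) v ∈ Ep := by
  lift m to ℕ using hm
  rw [zpow_natCast, coe_pow]
  exact hTEp.iterate m hv

theorem zpow_apply_mem_of_neg (hTEm : Set.MapsTo T.symm Em Em) (hv' : T.symm v ∈ Em) {m : ℤ}
    (hm : m < 0) : (T ^ m) v ∈ Em := by
  obtain ⟨n, rfl⟩ : ∃ n : ℕ, m = -((n : ℤ) + 1) := ⟨(-m - 1).toNat, by omega⟩
  rw [zpow_neg_add_one_apply, coe_pow]
  exact hTEm.iterate n hv'

theorem summable_norm_zpow_apply (hTEp : Set.MapsTo T Ep Ep) (hTEm : Set.MapsTo T.symm Em Em)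
    {lam : ℝ} (hlam0 : 0 ≤ lam) (hlam1 : lam < 1)
    (hcon : ∀ x ∈ Ep, ‖T x‖ ≤ lam * ‖x‖) (hexp : ∀ x ∈ Em, ‖T.symm x‖ ≤ lam * ‖x‖)
    (hv : v ∈ Ep) (hv' : T.symm v ∈ Em) :
    Summable fun m : ℤ => ‖(T ^ m) v‖ := by
  have hgeom := summable_geometric_of_lt_one hlam0 hlam1
  refine .of_nat_of_neg_add_one ?_ ?_
  · refine (hgeom.mul_right ‖v‖).of_nonneg_of_le (fun _ => norm_nonneg _) fun n => ?_
    rw [zpow_natCast]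
    exact norm_pow_apply_le hTEp hlam0 hcon hv n
  · refine (hgeom.mul_right ‖T.symm v‖).of_nonneg_of_le (fun _ => norm_nonneg _) fun n => ?_
    rw [zpow_neg_add_one_apply]
    exact norm_pow_apply_le hTEm hlam0 hexp hv' n

theorem symm_apply_mem_of_isFixedPt (hTEp : Set.MapsTo T Ep Ep) {x : B} (hx : x ∈ Ep)
    {j k : ℤ} (hj : 0 < j) (hk : 0 < k) (hfix : Function.IsFixedPt (T ^ j) x)
    (hx_eq : x = v + (T ^ k) x) :
    T.symm v ∈ Ep := by
  have hv : v = (T ^ j) x - (T ^ k) x := by rw [hfix]; exact eq_sub_of_add_eq hx_eq.symm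
  have hsymm (i : ℤ) : T.symm ((T ^ i) x) = (T ^ (i - 1)) x := by
    rw [← inv_apply, ← zpow_neg_one, ← zpow_add_apply, neg_add_eq_sub]
  rw [hv, _root_.map_sub, hsymm, hsymm]
  exact sub_mem (zpow_apply_mem_of_nonneg hTEp hx (by omega))
    (zpow_apply_mem_of_nonneg hTEp hx (by omega))

theorem not_isFixedPt_zpow_tsum_zpow_mul_apply [CompleteSpace B] (hEmc : IsClosed (Em : Set B))
    (hEpc : IsClosed (Ep : Set B)) (hdisj : Disjoint Em Ep) (hTEp : Set.MapsTo T Ep Ep)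
    (hTEm : Set.MapsTo T.symm Em Em) (hv : v ∈ Ep) (hv' : T.symm v ∈ Em) (hv0 : v ≠ 0) {j k : ℤ}
    (hsum : Summable fun n : ℤ => (T ^ (n * k)) v) (hj : 0 < j) (hjk : j < k) :
    ¬Function.IsFixedPt (T ^ j) (∑' n : ℤ, (T ^ (n * k)) v) := by
  intro hfix
  have hk : 0 < k := hj.trans hjk
  set A := ∑' n : ℕ, (T ^ ((n : ℤ) * k)) v
  set R := ∑' n : ℕ, (T ^ (-((n : ℤ) + 1) * k)) v
  have hsplit : ∑' n : ℤ, (T ^ (n * k)) v = A + R :=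
    tsum_of_nat_of_neg_add_one (hsum.comp_injective Nat.cast_injective)
      (hsum.comp_injective fun a b h => by simpa using h)
  have hApow (i : ℤ) (hi : 0 ≤ i) : (T ^ i) A ∈ Ep := by
    rw [ContinuousLinearEquiv.map_tsum]
    refine tsum_mem hEpc fun n => ?_
    rw [← zpow_add_apply]
    exact zpow_apply_mem_of_nonneg hTEp hv (by nlinarith)
  have hRpow (i : ℤ) (hi : i < k) : (T ^ i) R ∈ Em := by
    rw [ContinuousLinearEquiv.map_tsum]
    refine tsum_mem hEmc fun n => ?_
    rw [← zpow_add_apply]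
    exact zpow_apply_mem_of_neg hTEm hv' (by nlinarith)
  have hA : (T ^ j) A = A :=
    Submodule.eq_of_add_eq_add hdisj.symm (hApow j hj.le) (by simpa using hApow 0 le_rfl)
      (hRpow j hjk) (by simpa using hRpow 0 hk)
      (by rw [← _root_.map_add, ← hsplit, hfix.eq, hsplit])
  have hA_eq : A = v + (T ^ k) A :=
    tsum_nat_zpow_mul_apply_eq_add T v k (hsum.comp_injective Nat.cast_injective)
  have hv'0 := Submodule.disjoint_def.mp hdisj _ hv'
    (symm_apply_mem_of_isFixedPt hTEp (by simpa using hApow 0 le_rfl) hj hk hA hA_eq)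
  exact hv0 (by simpa using hv'0)

end TransitionOrbit

/-- for a non-zero transition vector v ∈ E⁺ ∩ T(E⁻) and every k ≥ 1,
the series ∑_{n ∈ ℤ} T^(nk) v converges absolutely and its sum is a periodic point of T
of exact (minimal) period k. -/
theorem stmt12 {B : Type*} [NormedAddCommGroup B] [NormedSpace ℝ B] [CompleteSpace B]
    (T : B ≃L[ℝ] B) (Em Ep : Submodule ℝ B)
    (hEmc : IsClosed (Em : Set B)) (hEpc : IsClosed (Ep : Set B))
    (hcompl : IsCompl Em Ep)
    (hTEp : ∀ x ∈ Ep, T x ∈ Ep) (hTEm : ∀ x ∈ Em, T.symm x ∈ Em)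
    (lam : ℝ) (hlam0 : 0 < lam) (hlam1 : lam < 1)
    (hcon : ∀ x ∈ Ep, ‖T x‖ ≤ lam * ‖x‖) (hexp : ∀ x ∈ Em, ‖T.symm x‖ ≤ lam * ‖x‖)
    (v : B) (hv : v ∈ Ep) (hv' : T.symm v ∈ Em) (hv0 : v ≠ 0)
    (k : ℕ) (hk : 1 ≤ k) :
    Summable (fun n : ℤ => ‖(T ^ (n * (k : ℤ))) v‖) ∧
    (T ^ (k : ℤ)) (∑' n : ℤ, (T ^ (n * (k : ℤ))) v) = ∑' n : ℤ, (T ^ (n * (k : ℤ))) v ∧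
    ∀ j : ℕ, 0 < j → j < k →
      (T ^ (j : ℤ)) (∑' n : ℤ, (T ^ (n * (k : ℤ))) v) ≠ ∑' n : ℤ, (T ^ (n * (k : ℤ))) v := by
  have hsum : Summable fun n : ℤ => ‖(T ^ (n * (k : ℤ))) v‖ :=
    (summable_norm_zpow_apply hTEp hTEm hlam0.le hlam1 hcon hexp hv hv').comp_injective
      (mul_left_injective₀ (by omega))
  refine ⟨hsum, isFixedPt_zpow_tsum_zpow_mul_apply T v k, fun j hj hjk => ?_⟩
  exact not_isFixedPt_zpow_tsum_zpow_mul_apply hEmc hEpc hcompl.disjoint hTEp hTEm hv hv' hv0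
    hsum.of_norm (by exact_mod_cast hj) (by exact_mod_cast hjk)
end

section
/- Let T be a generalized hyperbolic operator on B with splitting E⁻ ⊕ E⁺ and projections Π⁺, Π⁻. If x is a periodic point with T^k x = x, then v := Π⁺x − T^k(Π⁺x) lies in T^k(E⁻) ∩ E⁺ and x = ∑_{n ∈ ℤ} T^{nk} v, with the series converging absolutely. -/
section aux
variable {B : Type*} [NormedAddCommGroup B] [NormedSpace ℝ B]

lemma aux_one_apply (T : B ≃L[ℝ] B) (y : B) : (1 : B ≃L[ℝ] B) y = y := rfl

lemma aux_zpow_apply (T : B ≃L[ℝ] B) (y : B) (a b : ℤ) :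
    (T ^ (a + b)) y = (T ^ a) ((T ^ b) y) := by
  rw [zpow_add]; rfl

lemma aux_pow_p (T : B ≃L[ℝ] B) (Ep : Submodule ℝ B)
    (hTEp : ∀ x ∈ Ep, T x ∈ Ep) (lam : ℝ)
    (hcon : ∀ x ∈ Ep, ‖T x‖ ≤ lam * ‖x‖) (hlam0 : 0 < lam) :
    ∀ (n : ℕ), ∀ y ∈ Ep, (T ^ (n : ℤ)) y ∈ Ep ∧ ‖(T ^ (n : ℤ)) y‖ ≤ lam ^ n * ‖y‖ := by
  intro n
  induction n with
  | zero => intro y hy; simpa [aux_one_apply] using hy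
  | succ n ih =>
    intro y hy
    have h1 : (T ^ ((n : ℤ) + 1)) y = (T ^ (n : ℤ)) (T y) := by
      rw [zpow_add, zpow_one]; rfl
    have hTy := hTEp y hy
    obtain ⟨hm, hb⟩ := ih (T y) hTy
    have : ((n + 1 : ℕ) : ℤ) = (n : ℤ) + 1 := by push_cast; ring
    rw [this, h1]
    refine ⟨hm, hb.trans ?_⟩
    have := hcon y hy
    calc lam ^ n * ‖T y‖ ≤ lam ^ n * (lam * ‖y‖) := by
          exact mul_le_mul_of_nonneg_left this (by positivity)
      _ = lam ^ (n + 1) * ‖y‖ := by ring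

lemma aux_pow_m (T : B ≃L[ℝ] B) (Em : Submodule ℝ B)
    (hTEm : ∀ x ∈ Em, T.symm x ∈ Em) (lam : ℝ)
    (hexp : ∀ x ∈ Em, ‖T.symm x‖ ≤ lam * ‖x‖) (hlam0 : 0 < lam) :
    ∀ (n : ℕ), ∀ y ∈ Em, (T ^ (-(n : ℤ))) y ∈ Em ∧ ‖(T ^ (-(n : ℤ))) y‖ ≤ lam ^ n * ‖y‖ := by
  intro n
  induction n with
  | zero => intro y hy; simpa [aux_one_apply] using hy
  | succ n ih =>
    intro y hy
    have h1 : (T ^ (-(n : ℤ) + -1)) y = (T ^ (-(n : ℤ))) ((T ^ (-1 : ℤ)) y) := aux_zpow_apply T y _ _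
    have h2 : (T ^ (-1 : ℤ)) y = T.symm y := by
      rw [zpow_neg_one]; rfl
    have hTy := hTEm y hy
    obtain ⟨hm, hb⟩ := ih (T.symm y) hTy
    have h3 : -((n + 1 : ℕ) : ℤ) = -(n : ℤ) + -1 := by push_cast; ring
    rw [h3, h1, h2]
    refine ⟨hm, hb.trans ?_⟩
    have := hexp y hy
    calc lam ^ n * ‖T.symm y‖ ≤ lam ^ n * (lam * ‖y‖) := by
          exact mul_le_mul_of_nonneg_left this (by positivity)
      _ = lam ^ (n + 1) * ‖y‖ := by ring

lemma aux_fix (T : B ≃L[ℝ] B) (x : B) (K : ℤ) (hper : (T ^ K) x = x) :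
    ∀ m : ℤ, (T ^ (m * K)) x = x := by
  have hnat : ∀ n : ℕ, (T ^ ((n : ℤ) * K)) x = x := by
    intro n
    induction n with
    | zero => simp [aux_one_apply]
    | succ n ih =>
      have : ((n + 1 : ℕ) : ℤ) * K = (n : ℤ) * K + K := by push_cast; ring
      rw [this, aux_zpow_apply, hper, ih]
  intro m
  rcases le_or_gt 0 m with hm | hm
  · obtain ⟨n, rfl⟩ := Int.eq_ofNat_of_zero_le hm
    exact hnat n
  · obtain ⟨n, hn⟩ : ∃ n : ℕ, -m = (n : ℤ) := Int.eq_ofNat_of_zero_le (by omega)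
    have h1 : (T ^ ((n : ℤ) * K)) x = x := hnat n
    have : (T ^ (m * K)) ((T ^ ((n : ℤ) * K)) x) = x := by
      rw [← aux_zpow_apply]
      have : m * K + (n : ℤ) * K = 0 := by
        have : (n : ℤ) = -m := hn.symm
        rw [this]; ring
      rw [this]; simp [aux_one_apply]
    rwa [h1] at this

end aux


/-- every periodic point x with T^k x = x has the representation
x = ∑_{n ∈ ℤ} T^(nk) v with v := Π⁺x − T^k(Π⁺x) ∈ T^k(E⁻) ∩ E⁺, the series converging
absolutely. Here Pp, Pm are the bounded projections associated to the splitting. -/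
theorem stmt13 {B : Type*} [NormedAddCommGroup B] [NormedSpace ℝ B] [CompleteSpace B]
    (T : B ≃L[ℝ] B) (Em Ep : Submodule ℝ B)
    (hEmc : IsClosed (Em : Set B)) (hEpc : IsClosed (Ep : Set B))
    (hcompl : IsCompl Em Ep)
    (hTEp : ∀ x ∈ Ep, T x ∈ Ep) (hTEm : ∀ x ∈ Em, T.symm x ∈ Em)
    (lam : ℝ) (hlam0 : 0 < lam) (hlam1 : lam < 1)
    (hcon : ∀ x ∈ Ep, ‖T x‖ ≤ lam * ‖x‖) (hexp : ∀ x ∈ Em, ‖T.symm x‖ ≤ lam * ‖x‖)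
    (Pp Pm : B →L[ℝ] B)
    (hP : ∀ x : B, Pp x ∈ Ep ∧ Pm x ∈ Em ∧ Pp x + Pm x = x)
    (x : B) (k : ℕ) (hk : 1 ≤ k) (hper : (T ^ (k : ℤ)) x = x) :
    Pp x - (T ^ (k : ℤ)) (Pp x) ∈ Ep ∧
    (T ^ (-(k : ℤ))) (Pp x - (T ^ (k : ℤ)) (Pp x)) ∈ Em ∧
    Summable (fun n : ℤ => ‖(T ^ (n * (k : ℤ))) (Pp x - (T ^ (k : ℤ)) (Pp x))‖) ∧
    x = ∑' n : ℤ, (T ^ (n * (k : ℤ))) (Pp x - (T ^ (k : ℤ)) (Pp x)) := by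
  have hlam0' : (0:ℝ) ≤ lam := hlam0.le
  set K : ℤ := (k : ℤ) with hK
  set v : B := Pp x - (T ^ K) (Pp x) with hv
  set f : ℤ → B := fun n => (T ^ (n * K)) v with hf
  have hPp := (hP x).1
  have hPm := (hP x).2.1
  have hPsum := (hP x).2.2
  have m1 : v ∈ Ep :=
    Ep.sub_mem hPp ((aux_pow_p T Ep hTEp lam hcon hlam0 k (Pp x) hPp).1)
  set w : B := (T ^ (-K)) v with hw
  have hinvfix : (T ^ (-K)) x = x := by
    have := aux_fix T x K hper (-1)
    simpa using this
  have hw_eq : w = Pm x - (T ^ (-K)) (Pm x) := by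
    have h1 : (T ^ (-K)) ((T ^ K) (Pp x)) = Pp x := by
      rw [← aux_zpow_apply]; simp [aux_one_apply]
    have h2 : (T ^ (-K)) (Pp x) + (T ^ (-K)) (Pm x) = Pp x + Pm x := by
      have := congrArg (T ^ (-K)) hPsum
      rw [map_add] at this
      rw [this, hPsum, hinvfix]
    have h3 : w = (T ^ (-K)) (Pp x) - Pp x := by
      rw [hw, hv, map_sub, h1]
    rw [h3, sub_eq_sub_iff_add_eq_add]
    rw [show (T ^ (-K)) (Pp x) + (T ^ (-K)) (Pm x) = (T ^ (-K)) (Pp x) + (T ^ (-K)) (Pm x) from rfl]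
    rw [h2]; abel
  have m2 : w ∈ Em := by
    rw [hw_eq]
    exact Em.sub_mem hPm ((aux_pow_m T Em hTEm lam hexp hlam0 k (Pm x) hPm).1)
  -- norm estimates
  have hfpos : ∀ n : ℕ, ‖f (n : ℤ)‖ ≤ lam ^ n * ‖v‖ := by
    intro n
    have hc : ((n : ℤ)) * K = ((n * k : ℕ) : ℤ) := by push_cast; ring
    have hb := (aux_pow_p T Ep hTEp lam hcon hlam0 (n * k) v m1).2
    have hle : lam ^ (n * k) ≤ lam ^ n :=
      pow_le_pow_of_le_one hlam0' hlam1.le (Nat.le_mul_of_pos_right n (by omega))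
    calc ‖f (n : ℤ)‖ = ‖(T ^ ((n * k : ℕ) : ℤ)) v‖ := by rw [hf]; simp only [hc]
    _ ≤ lam ^ (n * k) * ‖v‖ := hb
    _ ≤ lam ^ n * ‖v‖ := mul_le_mul_of_nonneg_right hle (norm_nonneg v)
  have hfneg : ∀ n : ℕ, ‖f (-((n : ℤ) + 1))‖ ≤ lam ^ n * ‖w‖ := by
    intro n
    have hc : (-((n : ℤ) + 1)) * K = (-((n * k : ℕ) : ℤ)) + -K := by push_cast; ring
    have heq : f (-((n : ℤ) + 1)) = (T ^ (-((n * k : ℕ) : ℤ))) w := by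
      rw [hf]
      simp only [hc]
      rw [aux_zpow_apply, hw]
    rw [heq]
    have hb := (aux_pow_m T Em hTEm lam hexp hlam0 (n * k) w m2).2
    have hle : lam ^ (n * k) ≤ lam ^ n :=
      pow_le_pow_of_le_one hlam0' hlam1.le (Nat.le_mul_of_pos_right n (by omega))
    exact hb.trans (mul_le_mul_of_nonneg_right hle (norm_nonneg w))
  have hgeo : Summable (fun n : ℕ => lam ^ n) := summable_geometric_of_lt_one hlam0' hlam1
  have hs1 : Summable (fun n : ℕ => ‖f (n : ℤ)‖) :=
    (hgeo.mul_right ‖v‖).of_nonneg_of_le (fun n => norm_nonneg _) hfpos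
  have hs2' : Summable (fun n : ℕ => ‖f (-((n : ℤ) + 1))‖) :=
    (hgeo.mul_right ‖w‖).of_nonneg_of_le (fun n => norm_nonneg _) hfneg
  have hs2 : Summable (fun n : ℕ => ‖f (-(n : ℤ))‖) := by
    refine (summable_nat_add_iff 1).1 ?_
    have he : (fun n : ℕ => ‖f (-(((n + 1) : ℕ) : ℤ))‖)
        = fun n : ℕ => ‖f (-((n : ℤ) + 1))‖ := by
      funext n; norm_cast
    exact he ▸ hs2'
  have hsumnorm : Summable (fun n : ℤ => ‖f n‖) := Summable.of_nat_of_neg hs1 hs2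
  -- telescoping, positive side
  have hstep : ∀ N : ℕ, f (N : ℤ)
      = (T ^ ((N : ℤ) * K)) (Pp x) - (T ^ (((N : ℤ) + 1) * K)) (Pp x) := by
    intro N
    rw [hf]
    show (T ^ ((N : ℤ) * K)) v = _
    rw [hv, map_sub]
    congr 1
    rw [show ((N : ℤ) + 1) * K = (N : ℤ) * K + K by ring, aux_zpow_apply]
  have hsum1 : ∀ N : ℕ, ∑ n ∈ Finset.range N, f (n : ℤ)
      = Pp x - (T ^ ((N : ℤ) * K)) (Pp x) := by
    intro N
    induction N with
    | zero => simp [aux_one_apply]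
    | succ N ih =>
      rw [Finset.sum_range_succ, ih, hstep]
      push_cast
      abel
  -- telescoping, negative side
  have hstepn : ∀ N : ℕ, f (-((N : ℤ) + 1))
      = (T ^ (-((N : ℤ) + 1) * K)) (Pp x) - (T ^ (-(N : ℤ) * K)) (Pp x) := by
    intro N
    rw [hf]
    show (T ^ (-((N : ℤ) + 1) * K)) v = _
    rw [hv, map_sub]
    congr 1
    rw [show -(N : ℤ) * K = -((N : ℤ) + 1) * K + K by ring, aux_zpow_apply]
  have hfixN : ∀ N : ℕ, (T ^ (-(N : ℤ) * K)) (Pp x) - Pp x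
      = Pm x - (T ^ (-(N : ℤ) * K)) (Pm x) := by
    intro N
    have hx : (T ^ (-(N : ℤ) * K)) x = x := aux_fix T x K hper (-(N : ℤ))
    have h2 : (T ^ (-(N : ℤ) * K)) (Pp x) + (T ^ (-(N : ℤ) * K)) (Pm x) = Pp x + Pm x := by
      have := congrArg (T ^ (-(N : ℤ) * K)) hPsum
      rw [map_add] at this
      rw [this, hPsum, hx]
    rw [sub_eq_sub_iff_add_eq_add, h2]
    abel
  have hsum2 : ∀ N : ℕ, ∑ n ∈ Finset.range N, f (-((n : ℤ) + 1))
      = Pm x - (T ^ (-(N : ℤ) * K)) (Pm x) := by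
    intro N
    rw [← hfixN]
    induction N with
    | zero => simp [aux_one_apply]
    | succ N ih =>
      rw [Finset.sum_range_succ, ih, hstepn]
      push_cast
      abel
  -- limits
  have tendP : Filter.Tendsto (fun N : ℕ => (T ^ ((N : ℤ) * K)) (Pp x))
      Filter.atTop (nhds 0) := by
    apply squeeze_zero_norm (a := fun N : ℕ => lam ^ N * ‖Pp x‖)
    · intro N
      have hc : ((N : ℤ)) * K = ((N * k : ℕ) : ℤ) := by push_cast; ring
      rw [hc]
      refine ((aux_pow_p T Ep hTEp lam hcon hlam0 (N * k) (Pp x) hPp).2).trans ?_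
      exact mul_le_mul_of_nonneg_right
        (pow_le_pow_of_le_one hlam0' hlam1.le (Nat.le_mul_of_pos_right N (by omega)))
        (norm_nonneg _)
    · simpa using (tendsto_pow_atTop_nhds_zero_of_lt_one hlam0' hlam1).mul_const ‖Pp x‖
  have tendM : Filter.Tendsto (fun N : ℕ => (T ^ (-(N : ℤ) * K)) (Pm x))
      Filter.atTop (nhds 0) := by
    apply squeeze_zero_norm (a := fun N : ℕ => lam ^ N * ‖Pm x‖)
    · intro N
      have hc : (-(N : ℤ)) * K = -((N * k : ℕ) : ℤ) := by push_cast; ring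
      rw [hc]
      refine ((aux_pow_m T Em hTEm lam hexp hlam0 (N * k) (Pm x) hPm).2).trans ?_
      exact mul_le_mul_of_nonneg_right
        (pow_le_pow_of_le_one hlam0' hlam1.le (Nat.le_mul_of_pos_right N (by omega)))
        (norm_nonneg _)
    · simpa using (tendsto_pow_atTop_nhds_zero_of_lt_one hlam0' hlam1).mul_const ‖Pm x‖
  -- HasSums
  have hHS1 : HasSum (fun n : ℕ => f (n : ℤ)) (Pp x) := by
    rw [hasSum_iff_tendsto_nat_of_summable_norm hs1]
    have he : (fun N : ℕ => ∑ n ∈ Finset.range N, f (n : ℤ))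
        = fun N : ℕ => Pp x - (T ^ ((N : ℤ) * K)) (Pp x) := funext hsum1
    rw [he]
    simpa using Filter.Tendsto.sub (tendsto_const_nhds (x := Pp x)) tendP
  have hHS2 : HasSum (fun n : ℕ => f (-((n : ℤ) + 1))) (Pm x) := by
    rw [hasSum_iff_tendsto_nat_of_summable_norm hs2']
    have he : (fun N : ℕ => ∑ n ∈ Finset.range N, f (-((n : ℤ) + 1)))
        = fun N : ℕ => Pm x - (T ^ (-(N : ℤ) * K)) (Pm x) := funext hsum2
    rw [he]
    simpa using Filter.Tendsto.sub (tendsto_const_nhds (x := Pm x)) tendM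
  have hHS : HasSum f x := by
    have h := hHS1.of_nat_of_neg_add_one hHS2
    rwa [hPsum] at h
  exact ⟨m1, m2, hsumnorm, hHS.tsum_eq.symm⟩
end
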